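/- arXiv:0705.1894 — 6 statements merged into one kernel-verified Lean document; each statement's English description precedes it below -/
import Mathlib

section
/- Let (X,r) be a quadratic set with r(x,y) = (λ_x(y), ρ_y(x)). Then any two of the following three conditions imply the third: (1) r is involutive (r∘r = id); (2) r is nondegenerate (all λ_x, ρ_x are bijective) and satisfies the cyclic conditions cl1: λ_{ρ_x(y)}(x) = λ_y(x), cr1: ρ_{λ_x(y)}(x) = ρ_y(x), cl2: λ_{λ_x(y)}(x) = λ_y(x), cr2: ρ_{ρ_x(y)}(x) = ρ_y(x) for all x,y ∈ X; (3) the condition lri: ρ_x(λ_x(y)) = y = λ_x(ρ_x(y)) for all x,y ∈ X. -/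
/-- The quadratic map `r(x,y) = (λ_x(y), ρ_y(x))`. -/
def ybMap {X : Type*} (lam rho : X → X → X) : X × X → X × X :=
  fun p => (lam p.1 p.2, rho p.2 p.1)

/-- `r¹² = r × id` on `X × X × X`. -/
def ybR12 {X : Type*} (lam rho : X → X → X) : X × X × X → X × X × X :=
  fun p => (lam p.1 p.2.1, rho p.2.1 p.1, p.2.2)

/-- `r²³ = id × r` on `X × X × X`. -/
def ybR23 {X : Type*} (lam rho : X → X → X) : X × X × X → X × X × X :=
  fun p => (p.1, lam p.2.1 p.2.2, rho p.2.2 p.2.1)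

/-- The braid (Yang–Baxter) relation `r¹²r²³r¹² = r²³r¹²r²³`. -/
def YbBraided {X : Type*} (lam rho : X → X → X) : Prop :=
  ybR12 lam rho ∘ ybR23 lam rho ∘ ybR12 lam rho
    = ybR23 lam rho ∘ ybR12 lam rho ∘ ybR23 lam rho

/-- `r` is involutive: `r ∘ r = id`. -/
def YbInvolutive {X : Type*} (lam rho : X → X → X) : Prop :=
  ∀ p, ybMap lam rho (ybMap lam rho p) = p

/-- Nondegeneracy: all `λ_x` and `ρ_x` are bijective. -/
def YbNondeg {X : Type*} (lam rho : X → X → X) : Prop :=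
  (∀ x, Function.Bijective (lam x)) ∧ (∀ x, Function.Bijective (rho x))

/-- Condition lri: `ρ_x(λ_x(y)) = y = λ_x(ρ_x(y))`. -/
def YbLri {X : Type*} (lam rho : X → X → X) : Prop :=
  ∀ x y, rho x (lam x y) = y ∧ lam x (rho x y) = y

/-- Square-free: `r(x,x) = (x,x)`. -/
def YbSquareFree {X : Type*} (lam rho : X → X → X) : Prop :=
  ∀ x, lam x x = x ∧ rho x x = x

/-- The cyclic conditions cl1, cr1, cl2, cr2. -/
def YbCyclic {X : Type*} (lam rho : X → X → X) : Prop :=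
  (∀ x y, lam (rho x y) x = lam y x) ∧ (∀ x y, rho (lam x y) x = rho y x) ∧
  (∀ x y, lam (lam x y) x = lam y x) ∧ (∀ x y, rho (rho x y) x = rho y x)

/-! The identities `λ_{λ_x(y)}(ρ_y(x)) = x` and `ρ_{ρ_y(x)}(λ_x(y)) = y` expressing `r² = id`
turn into lri once cl1/cr1 rewrite the outer index, and conversely lri applied to them gives
cl1/cr1. Then cl2/cr2 follow from cl1/cr1 by substituting `λ_x(y)` (resp. `ρ_x(y)`) for `y`,
and lri alone makes `ρ_x` and `λ_x` mutually inverse. -/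

section

variable {X : Type*} {lam rho : X → X → X}

namespace YbInvolutive

theorem lam_lam_rho (h : YbInvolutive lam rho) (x y : X) : lam (lam x y) (rho y x) = x :=
  congrArg Prod.fst (h (x, y))

theorem rho_rho_lam (h : YbInvolutive lam rho) (x y : X) : rho (rho y x) (lam x y) = y :=
  congrArg Prod.snd (h (x, y))

theorem ybLri (h : YbInvolutive lam rho) (hlam : ∀ x, Function.Surjective (lam x))
    (hrho : ∀ x, Function.Surjective (rho x))
    (cl1 : ∀ x y, lam (rho x y) x = lam y x) (cr1 : ∀ x y, rho (lam x y) x = rho y x) :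
    YbLri lam rho := by
  intro x y
  constructor
  · obtain ⟨z, rfl⟩ := hrho y x
    rw [cl1 y z]
    exact h.rho_rho_lam z y
  · obtain ⟨z, rfl⟩ := hlam y x
    rw [cr1 y z]
    exact h.lam_lam_rho y z

end YbInvolutive

namespace YbLri

theorem ybNondeg (h : YbLri lam rho) : YbNondeg lam rho :=
  ⟨fun x => Function.bijective_iff_has_inverse.mpr
      ⟨rho x, fun y => (h x y).1, fun y => (h x y).2⟩,
    fun x => Function.bijective_iff_has_inverse.mpr
      ⟨lam x, fun y => (h x y).2, fun y => (h x y).1⟩⟩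

theorem cl1_of_ybInvolutive (h : YbLri lam rho) (hinv : YbInvolutive lam rho) (x y : X) :
    lam (rho x y) x = lam y x := by
  simpa only [hinv.rho_rho_lam y x] using (h (rho x y) (lam y x)).2

theorem cr1_of_ybInvolutive (h : YbLri lam rho) (hinv : YbInvolutive lam rho) (x y : X) :
    rho (lam x y) x = rho y x := by
  simpa only [hinv.lam_lam_rho x y] using (h (lam x y) (rho y x)).1

theorem cl2_of_cl1 (h : YbLri lam rho) (cl1 : ∀ x y, lam (rho x y) x = lam y x) (x y : X) :
    lam (lam x y) x = lam y x := by
  simpa only [(h x y).1] using (cl1 x (lam x y)).symm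

theorem cr2_of_cr1 (h : YbLri lam rho) (cr1 : ∀ x y, rho (lam x y) x = rho y x) (x y : X) :
    rho (rho x y) x = rho y x := by
  simpa only [(h x y).2] using (cr1 x (rho x y)).symm

theorem ybInvolutive (h : YbLri lam rho)
    (cl1 : ∀ x y, lam (rho x y) x = lam y x) (cr1 : ∀ x y, rho (lam x y) x = rho y x) :
    YbInvolutive lam rho := by
  rintro ⟨x, y⟩
  refine Prod.ext ?_ ?_
  · change lam (lam x y) (rho y x) = x
    rw [← cr1 x y]
    exact (h _ _).2
  · change rho (rho y x) (lam x y) = y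
    rw [← cl1 y x]
    exact (h _ _).1

end YbLri

end

theorem two_of_three_general {X : Type*} (lam rho : X → X → X) :
    ((YbInvolutive lam rho ∧ (YbNondeg lam rho ∧ YbCyclic lam rho)) → YbLri lam rho) ∧
    ((YbInvolutive lam rho ∧ YbLri lam rho) → (YbNondeg lam rho ∧ YbCyclic lam rho)) ∧
    (((YbNondeg lam rho ∧ YbCyclic lam rho) ∧ YbLri lam rho) → YbInvolutive lam rho) := by
  refine ⟨?_, ?_, ?_⟩
  · rintro ⟨hinv, ⟨hlam, hrho⟩, cl1, cr1, -, -⟩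
    exact hinv.ybLri (fun x => (hlam x).2) (fun x => (hrho x).2) cl1 cr1
  · rintro ⟨hinv, hlri⟩
    have cl1 := hlri.cl1_of_ybInvolutive hinv
    have cr1 := hlri.cr1_of_ybInvolutive hinv
    exact ⟨hlri.ybNondeg, cl1, cr1, hlri.cl2_of_cl1 cl1, hlri.cr2_of_cr1 cr1⟩
  · rintro ⟨⟨-, cl1, cr1, -, -⟩, hlri⟩
    exact hlri.ybInvolutive cl1 cr1

/-- for a quadratic set, any two of (involutive), (nondegenerate and cyclic),
(lri) imply the third. -/
theorem two_of_three {X : Type*} (lam rho : X → X → X)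
    (hquad : Function.Bijective (ybMap lam rho)) :
    ((YbInvolutive lam rho ∧ (YbNondeg lam rho ∧ YbCyclic lam rho)) → YbLri lam rho) ∧
    ((YbInvolutive lam rho ∧ YbLri lam rho) → (YbNondeg lam rho ∧ YbCyclic lam rho)) ∧
    (((YbNondeg lam rho ∧ YbCyclic lam rho) ∧ YbLri lam rho) → YbInvolutive lam rho) :=
  two_of_three_general lam rho
end

section
/- Let (X,r) be a nondegenerate solution satisfying lri. For τ ∈ Sym(X), τ is an automorphism of (X,r) (i.e. (τ×τ)∘r = r∘(τ×τ)) if and only if τ∘λ_x∘τ^{-1} = λ_{τ(x)} for all x ∈ X. Consequently the automorphism group Aut(X,r) is contained in the normalizer in Sym(X) of the group G(X,r) generated by {λ_x : x ∈ X}. -/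
/-! Both components of `(τ × τ) ∘ r = r ∘ (τ × τ)` say that `τ` intertwines a left action with its
conjugate: the first is `τ λ_x = λ_{τ x} τ`, and the second is the same identity for `λ_y⁻¹`,
hence a consequence of the first. Conjugation by such a `τ` permutes the generators `λ_x` of
`G(X,r)`, so it normalizes `G(X,r)`. -/

namespace Equiv.Perm

variable {X : Type*}

theorem conj_eq_iff_apply_comm {τ σ σ' : Perm X} :
    τ * σ * τ⁻¹ = σ' ↔ ∀ y, τ (σ y) = σ' (τ y) := by
  rw [mul_inv_eq_iff_eq_mul, Equiv.ext_iff]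
  rfl

theorem prodMap_comp_ybMap_eq_iff (lam : X → Perm X) (τ : Perm X) :
    (fun p : X × X => (τ p.1, τ p.2)) ∘ ybMap (fun x y => lam x y) (fun y x => (lam y)⁻¹ x)
        = ybMap (fun x y => lam x y) (fun y x => (lam y)⁻¹ x)
          ∘ (fun p : X × X => (τ p.1, τ p.2)) ↔
      ∀ x, τ * lam x * τ⁻¹ = lam (τ x) := by
  simp only [conj_eq_iff_apply_comm, funext_iff, Function.comp_apply, ybMap, Prod.mk.injEq]
  refine ⟨fun h x y => (h (x, y)).1, fun h p => ⟨h p.1 p.2, ?_⟩⟩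
  have hinv : τ * (lam p.2)⁻¹ * τ⁻¹ = (lam (τ p.2))⁻¹ := by
    rw [← conj_inv, conj_eq_iff_apply_comm.2 (h p.2)]
  exact conj_eq_iff_apply_comm.1 hinv p.1

end Equiv.Perm

theorem Subgroup.mem_normalizer_closure_range_of_conj_eq {G ι : Type*} [Group G] {f : ι → G}
    {g : G} {e : ι → ι} (he : Function.Surjective e) (hconj : ∀ i, g * f i * g⁻¹ = f (e i)) :
    g ∈ normalizer (closure (Set.range f) : Set G) := by
  refine normalizer_le_normalizer_closure _ (mem_normalizer_iff_conj_image_eq.2 ?_)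
  rw [← Set.range_comp, ← he.range_comp f]
  exact congrArg Set.range (funext hconj)

theorem aut_iff_conj_and_aut_le_normalizer_general {X : Type*} (lam : X → Equiv.Perm X) :
    (∀ τ : Equiv.Perm X,
      ((fun p : X × X => (τ p.1, τ p.2)) ∘ ybMap (fun x y => lam x y) (fun y x => (lam y)⁻¹ x)
          = ybMap (fun x y => lam x y) (fun y x => (lam y)⁻¹ x)
            ∘ (fun p : X × X => (τ p.1, τ p.2))) ↔
        (∀ x : X, τ * lam x * τ⁻¹ = lam (τ x))) ∧
    (∀ τ : Equiv.Perm X,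
      ((fun p : X × X => (τ p.1, τ p.2)) ∘ ybMap (fun x y => lam x y) (fun y x => (lam y)⁻¹ x)
          = ybMap (fun x y => lam x y) (fun y x => (lam y)⁻¹ x)
            ∘ (fun p : X × X => (τ p.1, τ p.2))) →
        τ ∈ Subgroup.normalizer (Subgroup.closure (Set.range lam) : Set (Equiv.Perm X))) :=
  ⟨Equiv.Perm.prodMap_comp_ybMap_eq_iff lam, fun τ hτ =>
    Subgroup.mem_normalizer_closure_range_of_conj_eq τ.surjective
      ((Equiv.Perm.prodMap_comp_ybMap_eq_iff lam τ).1 hτ)⟩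

/-- for a nondegenerate solution with lri (encoded by `λ : X → Perm X`,
`ρ_y = λ_y⁻¹`), a permutation `τ` is an automorphism iff `τ λ_x τ⁻¹ = λ_{τ(x)}` for all `x`;
consequently every automorphism lies in the normalizer of `G(X,r) = ⟨λ_x⟩` in `Sym(X)`. -/
theorem aut_iff_conj_and_aut_le_normalizer {X : Type*} (lam : X → Equiv.Perm X)
    (hbr : YbBraided (fun x y => lam x y) (fun y x => (lam y)⁻¹ x)) :
    (∀ τ : Equiv.Perm X,
      ((fun p : X × X => (τ p.1, τ p.2)) ∘ ybMap (fun x y => lam x y) (fun y x => (lam y)⁻¹ x)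
          = ybMap (fun x y => lam x y) (fun y x => (lam y)⁻¹ x)
            ∘ (fun p : X × X => (τ p.1, τ p.2))) ↔
        (∀ x : X, τ * lam x * τ⁻¹ = lam (τ x))) ∧
    (∀ τ : Equiv.Perm X,
      ((fun p : X × X => (τ p.1, τ p.2)) ∘ ybMap (fun x y => lam x y) (fun y x => (lam y)⁻¹ x)
          = ybMap (fun x y => lam x y) (fun y x => (lam y)⁻¹ x)
            ∘ (fun p : X × X => (τ p.1, τ p.2))) →
        τ ∈ Subgroup.normalizer (Subgroup.closure (Set.range lam) : Set (Equiv.Perm X))) :=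
  aut_iff_conj_and_aut_le_normalizer_general lam
end

section
/- Let (Z,r) be a nondegenerate solution satisfying lri, X ⊆ Z an r-invariant subset, and α ∈ Z. Then the restriction λ_α|_X is an automorphism of the restricted solution (X, r|_{X×X}) if and only if λ_{ρ_y(α)}(x) = λ_α(x) for all x,y ∈ X. -/
/-!
The first component of the braid relation reads `λ_{λ_α(y)} ∘ λ_{ρ_y(α)} = λ_α ∘ λ_y`. Cancelling the
bijection `λ_{λ_α(y)}` shows that `λ_α` respects `λ` at `(y, x)` exactly when
`λ_{ρ_y(α)}(x) = λ_α(x)`. Under lri, `λ_α` respects `ρ` at `(y, x)` exactly when it respects `λ` at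
`(y, ρ_y(x))`, and `ρ_y(x)` stays in `X` by invariance.
-/

section

variable {Z : Type*} {lam rho : Z → Z → Z}

theorem YbBraided.lam_lam_rho (hbr : YbBraided lam rho) (x y z : Z) :
    lam (lam x y) (lam (rho y x) z) = lam x (lam y z) :=
  (Prod.mk.inj (congrFun hbr (x, y, z))).1

theorem YbLri.eq_rho_iff (hlri : YbLri lam rho) (a b c : Z) : b = rho a c ↔ lam a b = c := by
  constructor
  · rintro rfl
    exact (hlri a c).2
  · rintro rfl
    exact ((hlri a b).1).symm

theorem lam_map_lam_iff (hinj : ∀ z, Function.Injective (lam z)) (hbr : YbBraided lam rho)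
    (α x y : Z) :
    lam α (lam y x) = lam (lam α y) (lam α x) ↔ lam (rho y α) x = lam α x := by
  rw [← hbr.lam_lam_rho α y x]
  exact (hinj (lam α y)).eq_iff

theorem lam_map_rho_iff (hlri : YbLri lam rho) (α x y : Z) :
    lam α (rho y x) = rho (lam α y) (lam α x) ↔
      lam α (lam y (rho y x)) = lam (lam α y) (lam α (rho y x)) := by
  rw [hlri.eq_rho_iff, (hlri y x).2, eq_comm]

end

theorem restriction_aut_iff_general {Z : Type*} (lam rho : Z → Z → Z)
    (hnd : YbNondeg lam rho) (hbr : YbBraided lam rho) (hlri : YbLri lam rho)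
    (X : Set Z)
    (hXinv : ∀ x ∈ X, ∀ y ∈ X, lam x y ∈ X ∧ rho y x ∈ X)
    (α : Z) :
    (∀ x ∈ X, ∀ y ∈ X,
        lam α (lam x y) = lam (lam α x) (lam α y) ∧
        lam α (rho y x) = rho (lam α y) (lam α x)) ↔
      (∀ x ∈ X, ∀ y ∈ X, lam (rho y α) x = lam α x) := by
  have hinj : ∀ z, Function.Injective (lam z) := fun z => (hnd.1 z).injective
  have hlam_iff := lam_map_lam_iff hinj hbr α
  constructor
  · intro hhom x hx y hy
    exact (hlam_iff x y).1 (hhom y hy x hx).1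
  · intro hfix x hx y hy
    have hlam : ∀ u ∈ X, ∀ v ∈ X, lam α (lam u v) = lam (lam α u) (lam α v) :=
      fun u hu v hv => (hlam_iff v u).2 (hfix v hv u hu)
    exact ⟨hlam x hx y hy, (lam_map_rho_iff hlri α x y).2 (hlam y hy _ (hXinv x hx y hy).2)⟩

/-- criterion for `λ_α` to restrict to an automorphism of an `r`-invariant
subset `X` of a nondegenerate solution `(Z,r)` with lri:
`λ_α|_X ∈ Aut(X, r|_X)` iff `λ_{ρ_y(α)}(x) = λ_α(x)` for all `x, y ∈ X`. -/
theorem restriction_aut_iff {Z : Type*} (lam rho : Z → Z → Z)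
    (hnd : YbNondeg lam rho) (hbr : YbBraided lam rho) (hlri : YbLri lam rho)
    (X : Set Z)
    (hXinv : ∀ x ∈ X, ∀ y ∈ X, lam x y ∈ X ∧ rho y x ∈ X)
    (α : Z) (hbij : Set.BijOn (lam α) X X) :
    (∀ x ∈ X, ∀ y ∈ X,
        lam α (lam x y) = lam (lam α x) (lam α y) ∧
        lam α (rho y x) = rho (lam α y) (lam α x)) ↔
      (∀ x ∈ X, ∀ y ∈ X, lam (rho y α) x = lam α x) :=
  restriction_aut_iff_general lam rho hnd hbr hlri X hXinv α
end

section
/- Let (X,r) be a nondegenerate involutive solution (symmetric set). Define x ∼ y iff λ_x = λ_y, and let [x] denote the class of x. Then the induced actions λ_{[α]}([x]) := [λ_α(x)] and ρ_{[x]}([α]) := [ρ_x(α)] on the quotient [X] = X/∼ are well defined; in particular λ_x = λ_y implies [λ_α(x)] = [λ_α(y)] for all α ∈ X. -/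
/-!
Write `T x := λ_x⁻¹(x)`. Involutivity gives `ρ_{T x}(x) = T x`, so `T` is injective, and the
first component of the braid relation gives `λ_y (T (ρ_y x)) = T x`; hence
`ρ_y = T⁻¹ ∘ λ_y⁻¹ ∘ T` depends only on `λ_y`. With `λ_x = λ_y` and `ρ_x = ρ_y` in hand, the
identity `λ_{λ_a(x)} ∘ λ_{ρ_x(a)} = λ_a ∘ λ_x` shows that both induced actions are well defined.
-/

section

variable {X : Type*} {lam rho : X → X → X}

theorem YbBraided.lam_lam_eq (hbr : YbBraided lam rho) (x y z : X) :
    lam (lam x y) (lam (rho y x) z) = lam x (lam y z) :=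
  congrArg Prod.fst (congrFun hbr (x, y, z))

theorem YbInvolutive.lam_lam_rho_s6 (hinv : YbInvolutive lam rho) (x y : X) :
    lam (lam x y) (rho y x) = x :=
  congrArg Prod.fst (hinv (x, y))

theorem YbInvolutive.rho_eq_self_of_lam_eq_self (hinv : YbInvolutive lam rho) {x t : X}
    (hinj : Function.Injective (lam x)) (ht : lam x t = x) : rho t x = t :=
  hinj <| by simpa only [ht] using hinv.lam_lam_rho_s6 x t

theorem YbInvolutive.injective_of_lam_rightInverse (hinv : YbInvolutive lam rho)
    (hl : ∀ x, Function.Injective (lam x)) (hr : ∀ x, Function.Injective (rho x))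
    {T : X → X} (hT : ∀ x, lam x (T x) = x) : Function.Injective T := by
  intro x y hxy
  apply hr (T x)
  rw [hinv.rho_eq_self_of_lam_eq_self (hl x) (hT x), hxy,
    hinv.rho_eq_self_of_lam_eq_self (hl y) (hT y)]

theorem YbBraided.lam_rightInverse_rho (hbr : YbBraided lam rho) (hinv : YbInvolutive lam rho)
    (hl : ∀ x, Function.Injective (lam x)) {T : X → X} (hT : ∀ x, lam x (T x) = x) (x y : X) :
    lam y (T (rho y x)) = T x := by
  apply hl x
  rw [← hbr.lam_lam_eq, hT, hinv.lam_lam_rho_s6, hT]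

theorem YbBraided.rho_eq_of_lam_eq (hnd : YbNondeg lam rho) (hinv : YbInvolutive lam rho)
    (hbr : YbBraided lam rho) {x y : X} (hxy : lam x = lam y) : rho x = rho y := by
  obtain ⟨hl, hr⟩ := hnd
  choose T hT using fun x => (hl x).2 x
  have hTinj := hinv.injective_of_lam_rightInverse (fun x => (hl x).1) (fun x => (hr x).1) hT
  funext a
  apply hTinj
  apply (hl x).1
  rw [hbr.lam_rightInverse_rho hinv (fun x => (hl x).1) hT, hxy,
    hbr.lam_rightInverse_rho hinv (fun x => (hl x).1) hT]

theorem YbBraided.lam_lam_congr_right (hbr : YbBraided lam rho)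
    (hl : ∀ x, Function.Surjective (lam x)) {x y : X} (hlam : lam x = lam y)
    (hrho : rho x = rho y) (a : X) : lam (lam a x) = lam (lam a y) := by
  funext w
  obtain ⟨z, rfl⟩ := hl (rho x a) w
  calc lam (lam a x) (lam (rho x a) z) = lam a (lam x z) := hbr.lam_lam_eq a x z
    _ = lam (lam a y) (lam (rho y a) z) := by rw [hlam, hbr.lam_lam_eq]
    _ = lam (lam a y) (lam (rho x a) z) := by rw [hrho]

theorem YbBraided.lam_rho_congr_right (hbr : YbBraided lam rho)
    (hl : ∀ x, Function.Injective (lam x)) {α β : X} (hαβ : lam α = lam β) (a : X) :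
    lam (rho a α) = lam (rho a β) := by
  funext z
  apply hl (lam α a)
  calc lam (lam α a) (lam (rho a α) z) = lam α (lam a z) := hbr.lam_lam_eq α a z
    _ = lam (lam α a) (lam (rho a β) z) := by rw [hαβ, ← hbr.lam_lam_eq, ← hαβ]

end

/-- in a nondegenerate involutive solution, the induced actions on the
retraction `[X] = X/∼` (where `x ∼ y` iff `λ_x = λ_y`) are well defined:
`λ_α = λ_β` and `λ_x = λ_y` imply `λ_{λ_α(x)} = λ_{λ_β(y)}` and `λ_{ρ_x(α)} = λ_{ρ_y(β)}`. -/
theorem retract_actions_well_defined {X : Type*} (lam rho : X → X → X)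
    (hnd : YbNondeg lam rho) (hinv : YbInvolutive lam rho) (hbr : YbBraided lam rho) :
    ∀ α β x y : X, lam α = lam β → lam x = lam y →
      lam (lam α x) = lam (lam β y) ∧ lam (rho x α) = lam (rho y β) := by
  intro α β x y hαβ hxy
  have hrho : rho x = rho y := hbr.rho_eq_of_lam_eq hnd hinv hxy
  constructor
  · rw [hαβ]
    exact hbr.lam_lam_congr_right (fun z => (hnd.1 z).2) hxy hrho β
  · rw [hrho]
    exact hbr.lam_rho_congr_right (fun z => (hnd.1 z).1) hαβ y
end

section
/- Suppose (Z,r) is a symmetric set satisfying lri which is an extension of disjoint solutions (X,r_X) and (Y,r_Y). Then (Z,r) is a generalized twisted union (for all x ∈ X, α ∈ Y, λ_{ρ_x(α)} restricted to X is independent of x, and ρ_{λ_α(x)} restricted to Y is independent of α) if and only if it is a strong twisted union (the stu conditions λ_{ρ_y(α)}(x) = λ_α(x) and ρ_{λ_β(x)}(α) = ρ_x(α) hold for all x,y ∈ X and α,β ∈ Y). -/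
/-!
Involutivity and lri (`ρ_x = λ_x⁻¹`) give the cyclic conditions cl1 `λ_{ρ_x(y)}(x) = λ_y(x)` and
cr1 `ρ_{λ_x(y)}(x) = ρ_y(x)`. Taking `x' = z` in the gtu condition, cl1 turns `λ_{ρ_z(α)}(z)` into
`λ_α(z)`, so `λ_{ρ_x(α)}` is independent of `x ∈ X` exactly when it agrees with `λ_α` on `X`;
dually for `ρ`.
-/

namespace YbInvolutive

variable {Z : Type*} {lam rho : Z → Z → Z}

theorem lam_rho_apply_self (hinv : YbInvolutive lam rho) (hlri : YbLri lam rho) (x y : Z) :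
    lam (rho x y) x = lam y x := by
  have h : rho (rho x y) (lam y x) = x := congrArg Prod.snd (hinv (y, x))
  simpa only [(hlri _ _).2] using (congrArg (lam (rho x y)) h).symm

theorem rho_lam_apply_self (hinv : YbInvolutive lam rho) (hlri : YbLri lam rho) (x y : Z) :
    rho (lam x y) x = rho y x := by
  have h : lam (lam x y) (rho y x) = x := congrArg Prod.fst (hinv (x, y))
  simpa only [(hlri _ _).1] using (congrArg (rho (lam x y)) h).symm

end YbInvolutive

theorem gtu_iff_stu_general {Z : Type*} (lam rho : Z → Z → Z) (X Y : Set Z)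
    (hinv : YbInvolutive lam rho) (hlri : YbLri lam rho) :
    ((∀ α ∈ Y, ∀ x ∈ X, ∀ x' ∈ X, ∀ z ∈ X, lam (rho x α) z = lam (rho x' α) z) ∧
     (∀ x ∈ X, ∀ α ∈ Y, ∀ α' ∈ Y, ∀ β ∈ Y, rho (lam α x) β = rho (lam α' x) β)) ↔
    ((∀ x ∈ X, ∀ y ∈ X, ∀ α ∈ Y, lam (rho y α) x = lam α x) ∧
     (∀ α ∈ Y, ∀ β ∈ Y, ∀ x ∈ X, rho (lam β x) α = rho x α)) := by
  have cl1 := hinv.lam_rho_apply_self hlri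
  have cr1 := hinv.rho_lam_apply_self hlri
  constructor
  · rintro ⟨hlam, hrho⟩
    refine ⟨fun x hx y hy α hα => ?_, fun α hα β hβ x hx => ?_⟩
    · rw [hlam α hα y hy x hx x hx, cl1]
    · rw [hrho x hx β hβ α hα α hα, cr1]
  · rintro ⟨hlam, hrho⟩
    refine ⟨fun α hα x hx x' hx' z hz => ?_, fun x hx α hα α' hα' β hβ => ?_⟩
    · rw [hlam z hz x hx α hα, hlam z hz x' hx' α hα]
    · rw [hrho β hβ α hα x hx, hrho β hβ α' hα' x hx]

/-- a symmetric set `(Z,r)` with lri which is an extension of disjoint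
solutions on `X` and `Y` is a generalized twisted union iff it is a strong twisted union. -/
theorem gtu_iff_stu {Z : Type*} (lam rho : Z → Z → Z) (X Y : Set Z)
    (hdisj : Disjoint X Y) (hcover : X ∪ Y = Set.univ)
    (hXinv : ∀ x ∈ X, ∀ y ∈ X, lam x y ∈ X ∧ rho y x ∈ X)
    (hYinv : ∀ α ∈ Y, ∀ β ∈ Y, lam α β ∈ Y ∧ rho β α ∈ Y)
    (hnd : YbNondeg lam rho) (hinv : YbInvolutive lam rho)
    (hbr : YbBraided lam rho) (hlri : YbLri lam rho) :
    ((∀ α ∈ Y, ∀ x ∈ X, ∀ x' ∈ X, ∀ z ∈ X, lam (rho x α) z = lam (rho x' α) z) ∧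
     (∀ x ∈ X, ∀ α ∈ Y, ∀ α' ∈ Y, ∀ β ∈ Y, rho (lam α x) β = rho (lam α' x) β)) ↔
    ((∀ x ∈ X, ∀ y ∈ X, ∀ α ∈ Y, lam (rho y α) x = lam α x) ∧
     (∀ α ∈ Y, ∀ β ∈ Y, ∀ x ∈ X, rho (lam β x) α = rho x α)) :=
  gtu_iff_stu_general lam rho X Y hinv hlri
end

section
/- Let (X,r) be a finite nondegenerate involutive square-free solution with graph Γ(X,r) (vertices X, an edge x →^a y whenever λ_a(x) = y). Then the vertex set X_i of each connected component of Γ is precisely an orbit of the left action of G(X,r) = ⟨λ_x⟩ on X; each X_i is r-invariant; and if mpl(X,r) = m, then each restricted solution (X_i, r|_{X_i×X_i}) satisfies mpl(X_i) ≤ m−1. -/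
/-- Iterated retraction equivalence relative to an `r`-invariant subset `S`. -/
def ybRetRelOn {X : Type*} (lam : X → X → X) (S : Set X) : ℕ → X → X → Prop
  | 0 => fun x y => x = y
  | n + 1 => fun x y => ∀ z ∈ S, ybRetRelOn lam S n (lam x z) (lam y z)

/-- Connectedness in the graph `Γ(X,r)`: the equivalence closure of the edge relation
`u →^a λ_a(u)`. -/
def ybConn {X : Type*} (lam : X → X → X) : X → X → Prop :=
  Relation.EqvGen (fun u v => ∃ a, lam a u = v)

/-!
The orbit relation of `⟨λ_x⟩` is an equivalence relation containing every edge `u → λ_a(u)` of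
`Γ(X,r)`, and conversely each generator `λ_a` moves points along edges; so both relations coincide.
Involutivity gives `λ_{λ_y(z)}(ρ_z(y)) = y`, an edge from `ρ_z(y)` to `y`, so components are
`r`-invariant. If `mpl = k + 1`, square-freeness `λ_u(u) = u` turns `Ret^{k+1}(λ_a, λ_u)` into
`u ∼_k λ_a(u)` for the `k`-th retraction relation, so this equivalence relation also contains every
edge, hence relates any two points of a component.
-/

section

variable {X : Type*}

theorem ybRetRelOn_equivalence {lam : X → X → X} (S : Set X) :
    ∀ n, Equivalence (ybRetRelOn lam S n)
  | 0 => eq_equivalence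
  | n + 1 =>
    have e := ybRetRelOn_equivalence S n
    ⟨fun _ _ _ => e.refl _, fun h z hz => e.symm (h z hz),
      fun h h' z hz => e.trans (h z hz) (h' z hz)⟩

theorem ybRetRelOn_mono {lam : X → X → X} {S T : Set X} (hST : S ⊆ T) :
    ∀ n {x y}, ybRetRelOn lam T n x y → ybRetRelOn lam S n x y
  | 0, _, _, h => h
  | n + 1, _, _, h => fun z hz => ybRetRelOn_mono hST n (h z (hST hz))

theorem ybConn_equivalence (lam : X → X → X) : Equivalence (ybConn lam) :=
  Relation.EqvGen.is_equivalence _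

theorem ybConn_lam (lam : X → X → X) (a u : X) : ybConn lam u (lam a u) :=
  .rel _ _ ⟨a, rfl⟩

theorem ybConn_le_of_equivalence {lam : X → X → X} {R : X → X → Prop} (hR : Equivalence R)
    (hedge : ∀ a u, R u (lam a u)) : ybConn lam ≤ R :=
  fun _ _ h => hR.eqvGen_iff.mp (h.mono fun _ _ ⟨a, ha⟩ => ha ▸ hedge a _)

theorem ybConn_rho_of_involutive {lam rho : X → X → X} (hinv : YbInvolutive lam rho) (y z : X) :
    ybConn lam (rho z y) y :=
  .rel _ _ ⟨lam y z, congrArg Prod.fst (hinv (y, z))⟩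

theorem ybConn_iff_exists_mem_closure (lam : X → Equiv.Perm X) (x y : X) :
    ybConn (fun a u => lam a u) x y ↔
      ∃ g ∈ Subgroup.closure (Set.range lam), (g : Equiv.Perm X) x = y := by
  set H := Subgroup.closure (Set.range lam)
  have hconn := ybConn_equivalence fun a u => lam a u
  constructor
  · have hH : Equivalence fun u v => ∃ g ∈ H, g u = v :=
      ⟨fun u => ⟨1, H.one_mem, rfl⟩,
        fun ⟨g, hg, hgu⟩ => ⟨g⁻¹, H.inv_mem hg, by simp [← hgu]⟩,
        fun ⟨g, hg, hgu⟩ ⟨g', hg', hgv⟩ => ⟨g' * g, H.mul_mem hg' hg, by simp [hgu, hgv]⟩⟩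
    exact ybConn_le_of_equivalence hH
      (fun a u => ⟨lam a, Subgroup.subset_closure ⟨a, rfl⟩, rfl⟩) x y
  · rintro ⟨g, hg, rfl⟩
    induction hg using Subgroup.closure_induction generalizing x with
    | mem f hf =>
      obtain ⟨a, rfl⟩ := hf
      exact ybConn_lam _ a x
    | one => exact hconn.refl x
    | mul f f' _ _ hf hf' => exact hconn.trans (hf' x) (hf (f' x))
    | inv f _ hf =>
      have h := hf (f⁻¹ x)
      simp only [Equiv.Perm.coe_inv, Equiv.apply_symm_apply] at h
      exact hconn.symm h

theorem ybRetRelOn_pred_of_ybConn {lam : X → X → X} (S : Set X) {m : ℕ}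
    (hsf : ∀ u, lam u u = u) (hm : ∀ x y, ybRetRelOn lam Set.univ m x y) {y z : X}
    (h : ybConn lam y z) : ybRetRelOn lam S (m - 1) y z := by
  cases m with
  | zero => exact hm y z
  | succ k =>
    refine ybRetRelOn_mono (Set.subset_univ S) k ?_
    have e := ybRetRelOn_equivalence (lam := lam) Set.univ k
    refine ybConn_le_of_equivalence e (fun a u => e.symm ?_) y z h
    simpa only [hsf] using hm a u u (Set.mem_univ u)

end

theorem components_are_orbits_general {X : Type*}
    (lam : X → Equiv.Perm X) (rho : X → X → X) (m : ℕ)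
    (hinv : YbInvolutive (fun x y => lam x y) rho)
    (hsf : YbSquareFree (fun x y => lam x y) rho)
    (hm : (∀ x y : X, ybRetRelOn (fun x y => lam x y) Set.univ m x y) ∧
      ∀ j < m, ¬ (∀ x y : X, ybRetRelOn (fun x y => lam x y) Set.univ j x y)) :
    (∀ x y : X, ybConn (fun x y => lam x y) x y ↔
      ∃ g ∈ Subgroup.closure (Set.range lam), (g : Equiv.Perm X) x = y) ∧
    (∀ x y z : X, ybConn (fun x y => lam x y) x y → ybConn (fun x y => lam x y) x z →
      (ybConn (fun x y => lam x y) x (lam y z) ∧ ybConn (fun x y => lam x y) x (rho z y))) ∧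
    (∀ x : X, ∀ y ∈ {w | ybConn (fun x y => lam x y) x w},
      ∀ z ∈ {w | ybConn (fun x y => lam x y) x w},
        ybRetRelOn (fun x y => lam x y) {w | ybConn (fun x y => lam x y) x w} (m - 1) y z) := by
  have hconn := ybConn_equivalence fun x y => lam x y
  refine ⟨ybConn_iff_exists_mem_closure lam, fun x y z hxy hxz => ⟨?_, ?_⟩, ?_⟩
  · exact hconn.trans hxz (ybConn_lam _ y z)
  · exact hconn.trans hxy (hconn.symm (ybConn_rho_of_involutive hinv y z))
  · intro x y hy z hz
    exact ybRetRelOn_pred_of_ybConn _ (fun u => (hsf u).1) hm.1 (hconn.trans (hconn.symm hy) hz)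

/-- for a finite nondegenerate involutive square-free solution
(left action encoded as `λ : X → Perm X`): (1) the connected components of `Γ(X,r)` are
exactly the orbits of `G(X,r) = ⟨λ_x⟩`; (2) each component is `r`-invariant;
(3) if `mpl(X,r) = m` then each component, as a restricted solution, has `mpl ≤ m − 1`. -/
theorem components_are_orbits {X : Type*} [Finite X]
    (lam : X → Equiv.Perm X) (rho : X → X → X) (m : ℕ)
    (hndr : ∀ x : X, Function.Bijective (rho x))
    (hinv : YbInvolutive (fun x y => lam x y) rho)
    (hsf : YbSquareFree (fun x y => lam x y) rho)
    (hbr : YbBraided (fun x y => lam x y) rho)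
    (hm : (∀ x y : X, ybRetRelOn (fun x y => lam x y) Set.univ m x y) ∧
      ∀ j < m, ¬ (∀ x y : X, ybRetRelOn (fun x y => lam x y) Set.univ j x y)) :
    (∀ x y : X, ybConn (fun x y => lam x y) x y ↔
      ∃ g ∈ Subgroup.closure (Set.range lam), (g : Equiv.Perm X) x = y) ∧
    (∀ x y z : X, ybConn (fun x y => lam x y) x y → ybConn (fun x y => lam x y) x z →
      (ybConn (fun x y => lam x y) x (lam y z) ∧ ybConn (fun x y => lam x y) x (rho z y))) ∧
    (∀ x : X, ∀ y ∈ {w | ybConn (fun x y => lam x y) x w},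
      ∀ z ∈ {w | ybConn (fun x y => lam x y) x w},
        ybRetRelOn (fun x y => lam x y) {w | ybConn (fun x y => lam x y) x w} (m - 1) y z) :=
  components_are_orbits_general lam rho m hinv hsf hm
end
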